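/- For all vectors x, y ∈ ℝ⁸ one has ⟨x⌟Φ, y⌟Φ⟩ = 7⟨x,y⟩, where the left-hand side is the inner product of 3-forms. (This is the pointwise, Hodge-star-free form of the statement that the fundamental 4-form Φ determines the Euclidean metric.) -/

import Mathlib

open scoped BigOperators RealInnerProductSpace

noncomputable section

abbrev Form (n p : ℕ) := (Fin p → EuclideanSpace ℝ (Fin n)) → ℝ

namespace Form

/-- Wedge product of forms (shuffle convention; full antisymmetrization divided by p!q!). -/
def wedge {n p q : ℕ} (α : Form n p) (β : Form n q) : Form n (p + q) :=
  fun x =>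
    (((p.factorial * q.factorial : ℕ) : ℝ))⁻¹ *
      ∑ σ : Equiv.Perm (Fin (p + q)),
        ((Equiv.Perm.sign σ : ℤ) : ℝ) *
          (α fun i => x (σ (Fin.castAdd q i))) * (β fun j => x (σ (Fin.natAdd p j)))

/-- Inner product of `p`-forms. -/
def inner' {n p : ℕ} (α β : Form n p) : ℝ :=
  ((p.factorial : ℕ) : ℝ)⁻¹ *
    ∑ f : Fin p → Fin n,
      (α fun k => EuclideanSpace.single (f k) 1) * (β fun k => EuclideanSpace.single (f k) 1)

/-- Interior product of a vector and a form. -/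
def iprod {n p : ℕ} (v : EuclideanSpace ℝ (Fin n)) (α : Form n (p + 1)) : Form n p :=
  fun x => α (Fin.cons v x)

end Form

infixl:72 " ⋏ " => Form.wedge

/-- The 1-form dual to a vector. -/
def dual {n : ℕ} (v : EuclideanSpace ℝ (Fin n)) : Form n 1 := fun x => ⟪v, x 0⟫

abbrev E8 := EuclideanSpace ℝ (Fin 8)

/-- The basis vector `e`. -/
def e8 : E8 := EuclideanSpace.single 7 1

/-- The basis vectors `e₀,…,e₆` indexed mod 7. -/
def u7 (i : ZMod 7) : E8 := EuclideanSpace.single ⟨i.val, i.val_lt.trans (by norm_num)⟩ 1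

/-- The basis indexed by ℤ₈, with `e₇ = e`. -/
def u8 (i : ZMod 8) : E8 := EuclideanSpace.single ⟨i.val, i.val_lt⟩ 1

/-- The Spin(7) fundamental 4-form. -/
def Phi (σ : ℝ) : Form 8 4 := fun x =>
  (∑ i : ZMod 7, (dual e8 ⋏ dual (u7 i) ⋏ dual (u7 (i + 1)) ⋏ dual (u7 (i + 3))) x)
    - σ * ∑ i : ZMod 7,
        (dual (u7 (i + 2)) ⋏ dual (u7 (i + 4)) ⋏ dual (u7 (i + 5)) ⋏ dual (u7 (i + 6))) x

/-- The standard volume form of ℝ⁸. -/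
def vol8 : Form 8 8 :=
  dual e8 ⋏ dual (u7 0) ⋏ dual (u7 1) ⋏ dual (u7 2) ⋏ dual (u7 3) ⋏ dual (u7 4) ⋏ dual (u7 5)
    ⋏ dual (u7 6)

/-- The 2-forms spanning spin(7)ᗮ. -/
def beta (σ : ℝ) (i : ZMod 7) : Form 8 2 := fun x =>
  σ * (dual (u7 i) ⋏ dual e8) x + (dual (u7 (i + 1)) ⋏ dual (u7 (i + 3))) x
    + (dual (u7 (i + 4)) ⋏ dual (u7 (i + 5))) x + (dual (u7 (i + 2)) ⋏ dual (u7 (i + 6))) x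

/-!
Write `Φ = ∑_J c_J e^J` over fourteen index sets `J` of size four, with `c_J ∈ {1, -σ}`.
Expanding `x ⌟ e^J` along its first slot and using the Gram formula
`⟨u₁ ∧ ⋯ ∧ u_p, v₁ ∧ ⋯ ∧ v_p⟩ = det ⟨u_i, v_j⟩` gives `⟨x ⌟ Φ, y ⌟ Φ⟩ = ∑_{a,b} x_a y_b G_ab`
for an integer matrix `G` assembled from `3 × 3` minors of Kronecker deltas. A minor pairing
`J ∖ {a}` with `J' ∖ {b}` vanishes unless these sets agree, and two distinct index sets of `Φ`
never share exactly three elements, so `G` is diagonal with `G_aa = c_J² · #{J ∋ a} = 7`.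
-/

open Finset Equiv

theorem Finset.sum_sum_mul_fiberwise {P κ : Type*} [Fintype P] [Fintype κ] [DecidableEq κ]
    (π : P → κ) (x y : κ → ℝ) (F : P → P → ℝ) :
    ∑ q, ∑ r, x (π q) * y (π r) * F q r =
      ∑ a, ∑ b, x a * y b * ∑ q with π q = a, ∑ r with π r = b, F q r := by
  symm
  calc _ = ∑ a, ∑ b, ∑ q with π q = a, ∑ r with π r = b, x (π q) * y (π r) * F q r := by
        refine sum_congr rfl fun a _ => sum_congr rfl fun b _ => ?_
        rw [mul_sum]
        refine sum_congr rfl fun q hq => ?_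
        rw [mul_sum]
        refine sum_congr rfl fun r hr => ?_
        rw [(mem_filter.1 hq).2, (mem_filter.1 hr).2]
    _ = ∑ a, ∑ q with π q = a, ∑ r, x (π q) * y (π r) * F q r := by
        refine sum_congr rfl fun a _ => ?_
        rw [sum_comm]
        exact sum_congr rfl fun q _ => sum_fiberwise univ π _
    _ = _ := sum_fiberwise univ π _

namespace Form

variable {n p q : ℕ} {ι : Type*} [Fintype ι]

local notation "𝐞" a:max => EuclideanSpace.single a (1 : ℝ)

/-- The decomposable form `v₁♭ ∧ ⋯ ∧ v_p♭` (see `detForm_wedge_detForm`). -/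
def detForm (v : Fin p → EuclideanSpace ℝ (Fin n)) : Form n p :=
  fun x => (Matrix.of fun i j => ⟪v j, x i⟫).det

theorem detForm_apply (v x : Fin p → EuclideanSpace ℝ (Fin n)) :
    detForm v x = ∑ σ : Perm (Fin p), (Perm.sign σ : ℝ) * ∏ i, ⟪v i, x (σ i)⟫ := by
  simp [detForm, Matrix.det_apply']

theorem detForm_wedge_detForm (v : Fin p → EuclideanSpace ℝ (Fin n))
    (w : Fin q → EuclideanSpace ℝ (Fin n)) :
    detForm v ⋏ detForm w = detForm (Fin.append v w) := by
  funext x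
  set L : Perm (Fin (p + q)) → ℝ := fun ρ =>
    (Perm.sign ρ : ℝ) * ∏ k, ⟪Fin.append v w k, x (ρ k)⟫
  let embed : Perm (Fin p) → Perm (Fin q) → Perm (Fin (p + q)) := fun σ₁ σ₂ =>
    finSumFinEquiv.permCongr (σ₁.sumCongr σ₂)
  have term : ∀ τ σ₁ σ₂, (Perm.sign τ : ℝ) *
      ((Perm.sign σ₁ : ℝ) * ∏ i, ⟪v i, x (τ (Fin.castAdd q (σ₁ i)))⟫) *
      ((Perm.sign σ₂ : ℝ) * ∏ j, ⟪w j, x (τ (Fin.natAdd p (σ₂ j)))⟫) = L (τ * embed σ₁ σ₂) := by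
    intro τ σ₁ σ₂
    simp only [L, embed, Fin.prod_univ_add, Fin.append_left, Fin.append_right, Perm.mul_apply,
      permCongr_apply, finSumFinEquiv_symm_apply_castAdd, finSumFinEquiv_symm_apply_natAdd,
      Perm.sumCongr_apply, Sum.map_inl, Sum.map_inr, finSumFinEquiv_apply_left,
      finSumFinEquiv_apply_right, Perm.sign_mul, Perm.sign_permCongr, Perm.sign_sumCongr,
      Units.val_mul, Int.cast_mul]
    ring
  -- For fixed `(σ₁, σ₂)` the sum over `τ` is a full Leibniz expansion, hence the factor `p! q!`.
  have reindex : ∀ σ₁ σ₂, ∑ τ, L (τ * embed σ₁ σ₂) = detForm (Fin.append v w) x := fun σ₁ σ₂ =>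
    (Equiv.sum_comp (Equiv.mulRight (embed σ₁ σ₂)) L).trans (detForm_apply _ _).symm
  calc (detForm v ⋏ detForm w) x
      = ((p.factorial * q.factorial : ℕ) : ℝ)⁻¹ *
          ∑ τ, ∑ σ₂ : Perm (Fin q), ∑ σ₁ : Perm (Fin p), L (τ * embed σ₁ σ₂) := by
        simp only [wedge, detForm_apply, Finset.mul_sum, Finset.sum_mul, term]
    _ = ((p.factorial * q.factorial : ℕ) : ℝ)⁻¹ *
          ∑ σ₂ : Perm (Fin q), ∑ σ₁ : Perm (Fin p), ∑ τ, L (τ * embed σ₁ σ₂) := by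
        rw [Finset.sum_comm]
        exact congrArg _ (Finset.sum_congr rfl fun _ _ => Finset.sum_comm)
    _ = detForm (Fin.append v w) x := by
        simp only [reindex, Finset.sum_const, Finset.card_univ, Fintype.card_perm,
          Fintype.card_fin, nsmul_eq_mul]
        push_cast
        field_simp

theorem dual_eq_detForm (u : EuclideanSpace ℝ (Fin n)) : dual u = detForm ![u] := by
  funext x
  simp [dual, detForm, Matrix.det_unique]

theorem iprod_detForm (x : EuclideanSpace ℝ (Fin n))
    (v : Fin (p + 1) → EuclideanSpace ℝ (Fin n)) :
    iprod x (detForm v) =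
      ∑ k : Fin (p + 1), ((-1) ^ (k : ℕ) * ⟪v k, x⟫) • detForm (v ∘ k.succAbove) := by
  funext w
  simp [iprod, detForm, Matrix.det_succ_row_zero, Finset.sum_apply, Matrix.submatrix, mul_assoc]

theorem detForm_comp_perm (u x : Fin p → EuclideanSpace ℝ (Fin n)) (π : Perm (Fin p)) :
    detForm u (x ∘ π) = Perm.sign π * detForm u x :=
  Matrix.det_permute π (Matrix.of fun i j => ⟪u j, x i⟫)

theorem detForm_eq_sum_single (u x : Fin p → EuclideanSpace ℝ (Fin n)) :
    detForm u x = ∑ g : Fin p → Fin n, (∏ i, x i (g i)) * detForm u (fun i => 𝐞 (g i)) := by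
  have rows : (Matrix.of fun i j => ⟪u j, x i⟫) =
      fun i => ∑ a, x i a • fun j => ⟪u j, 𝐞 a⟫ := by
    ext i j
    simp [PiLp.inner_apply, mul_comm]
  have expand := (Matrix.detRowAlternating : (Fin p → ℝ) [⋀^Fin p]→ₗ[ℝ] ℝ).toMultilinearMap.map_sum
    fun i a => x i a • fun j => ⟪u j, 𝐞 a⟫
  simp only [AlternatingMap.coe_multilinearMap, MultilinearMap.map_smul_univ] at expand
  rw [detForm, rows]
  exact expand

/-- Cauchy–Binet, summed over all maps `Fin p → Fin n`: each `p`-subset is counted `p!` times. -/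
theorem inner'_detForm (u u' : Fin p → EuclideanSpace ℝ (Fin n)) :
    inner' (detForm u) (detForm u') = detForm u u' := by
  set m : (Fin p → Fin n) → ℝ := fun f => detForm u fun i => 𝐞 (f i)
  have shift : ∀ ρ : Perm (Fin p),
      ∑ f, m f * ∏ i, u' i (f (ρ i)) = Perm.sign ρ * detForm u u' := by
    intro ρ
    rw [detForm_eq_sum_single u u', Finset.mul_sum,
      ← Equiv.sum_comp (Equiv.arrowCongr ρ (Equiv.refl _))]
    refine Finset.sum_congr rfl fun g _ => ?_
    have hm : m (Equiv.arrowCongr ρ (Equiv.refl _) g) = Perm.sign ρ * m g := by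
      rw [show m (Equiv.arrowCongr ρ (Equiv.refl _) g) = detForm u ((fun i => 𝐞 (g i)) ∘ ρ.symm)
        from rfl, detForm_comp_perm, Perm.sign_symm]
    rw [hm]
    simp only [arrowCongr_apply, coe_refl, Function.comp_apply, symm_apply_apply, id_eq, m]
    ring
  calc inner' (detForm u) (detForm u')
      = (p.factorial : ℝ)⁻¹ *
          ∑ ρ : Perm (Fin p), Perm.sign ρ * ∑ f, m f * ∏ i, u' i (f (ρ i)) := by
        simp only [inner', detForm_apply u', m, EuclideanSpace.inner_single_right, one_mul,
          RCLike.conj_to_real, Finset.mul_sum]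
        rw [Finset.sum_comm]
        refine Finset.sum_congr rfl fun ρ _ => Finset.sum_congr rfl fun f _ => ?_
        ring
    _ = detForm u u' := by
        simp only [shift, ← mul_assoc, ← Int.cast_mul, ← Units.val_mul, Int.units_mul_self,
          Units.val_one, Int.cast_one, one_mul, sum_const, card_univ, Fintype.card_perm,
          Fintype.card_fin, nsmul_eq_mul]
        field_simp

theorem iprod_sum_smul (x : EuclideanSpace ℝ (Fin n)) (c : ι → ℝ) (α : ι → Form n (p + 1)) :
    iprod x (∑ i, c i • α i) = ∑ i, c i • iprod x (α i) := by
  funext w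
  simp [iprod, Finset.sum_apply]

theorem inner'_sum_smul {κ : Type*} [Fintype κ] (a : ι → ℝ) (α : ι → Form n p) (b : κ → ℝ)
    (β : κ → Form n p) :
    inner' (∑ i, a i • α i) (∑ k, b k • β k) = ∑ i, ∑ k, a i * b k * inner' (α i) (β k) := by
  simp only [inner', Finset.sum_apply, Pi.smul_apply, smul_eq_mul, Finset.sum_mul_sum]
  simp only [Finset.mul_sum]
  rw [Finset.sum_comm]
  refine Finset.sum_congr rfl fun i _ => ?_
  rw [Finset.sum_comm]
  exact Finset.sum_congr rfl fun k _ => Finset.sum_congr rfl fun f _ => by ring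

theorem detForm_single_single (s t : Fin p → Fin n) :
    detForm (fun k => 𝐞 (s k)) (fun k => 𝐞 (t k)) =
      ((Matrix.of fun i j => if s i = t j then 1 else 0 : Matrix (Fin p) (Fin p) ℤ).det : ℝ) := by
  rw [← eq_intCast (Int.castRingHom ℝ), RingHom.map_det, detForm, ← Matrix.det_transpose]
  congr 1
  ext i j
  simp [EuclideanSpace.inner_single_left, PiLp.single_apply]

/-- The form `∑ⱼ cⱼ e^{T j}`, where `e^t = e_{t 0} ∧ ⋯ ∧ e_{t (p-1)}`. -/
def basisSum (c : ι → ℤ) (T : ι → Fin p → Fin n) : Form n p :=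
  ∑ j, (c j : ℝ) • detForm fun k => 𝐞 (T j k)

theorem iprod_basisSum (x : EuclideanSpace ℝ (Fin n)) (c : ι → ℤ)
    (T : ι → Fin (p + 1) → Fin n) :
    iprod x (basisSum c T) = ∑ q : ι × Fin (p + 1),
      ((c q.1 : ℝ) * (-1) ^ (q.2 : ℕ) * x (T q.1 q.2)) •
        detForm fun k => 𝐞 (T q.1 (q.2.succAbove k)) := by
  simp only [basisSum, iprod_sum_smul, iprod_detForm, Finset.smul_sum, smul_smul,
    Fintype.sum_prod_type, EuclideanSpace.inner_single_left]
  simp [mul_assoc, Function.comp_def]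

def contractionGram (c : ι → ℤ) (T : ι → Fin (p + 1) → Fin n) (a b : Fin n) : ℤ :=
  ∑ q : ι × Fin (p + 1) with T q.1 q.2 = a, ∑ r : ι × Fin (p + 1) with T r.1 r.2 = b,
    c q.1 * c r.1 * (-1) ^ (q.2 + r.2 : ℕ) *
      (Matrix.of fun i j => if T q.1 (q.2.succAbove i) = T r.1 (r.2.succAbove j) then 1 else 0).det

theorem inner'_iprod_basisSum (c : ι → ℤ) (T : ι → Fin (p + 1) → Fin n)
    (x y : EuclideanSpace ℝ (Fin n)) :
    inner' (iprod x (basisSum c T)) (iprod y (basisSum c T)) =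
      ∑ a, ∑ b, x a * y b * contractionGram c T a b := by
  rw [iprod_basisSum, iprod_basisSum, inner'_sum_smul]
  simp only [inner'_detForm, detForm_single_single]
  push_cast [contractionGram]
  rw [← Finset.sum_sum_mul_fiberwise (fun q : ι × Fin (p + 1) => T q.1 q.2)]
  exact Finset.sum_congr rfl fun q _ => Finset.sum_congr rfl fun r _ => by ring

end Form

def ZMod.toFin8 (i : ZMod 7) : Fin 8 := ⟨i.val, i.val_lt.trans (by norm_num)⟩

def spin7Index : ZMod 7 ⊕ ZMod 7 → Fin 4 → Fin 8
  | .inl i => ![7, i.toFin8, (i + 1).toFin8, (i + 3).toFin8]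
  | .inr i => ![(i + 2).toFin8, (i + 4).toFin8, (i + 5).toFin8, (i + 6).toFin8]

def spin7Coeff (s : ℤ) : ZMod 7 ⊕ ZMod 7 → ℤ :=
  Sum.elim 1 fun _ => -s

theorem contractionGram_spin7 (s : ℤ) (hs : s = 1 ∨ s = -1) (a b : Fin 8) :
    Form.contractionGram (spin7Coeff s) spin7Index a b = if a = b then 7 else 0 := by
  simp only [Form.contractionGram, Matrix.det_fin_three, Matrix.of_apply]
  revert a b
  rcases hs with rfl | rfl <;> decide

theorem dual_wedge_dual_wedge_dual_wedge_dual {n : ℕ} (a b c d : EuclideanSpace ℝ (Fin n)) :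
    (dual a ⋏ dual b ⋏ dual c ⋏ dual d : Form n 4) = Form.detForm ![a, b, c, d] := by
  simp only [Form.dual_eq_detForm, Form.detForm_wedge_detForm]
  congr 1
  funext k
  fin_cases k <;> rfl

theorem Phi_eq_basisSum (s : ℤ) : Phi s = Form.basisSum (spin7Coeff s) spin7Index := by
  have summand : ∀ j, Form.detForm (fun k => EuclideanSpace.single (spin7Index j k) (1 : ℝ)) =
      Sum.elim (fun i => Form.detForm ![e8, u7 i, u7 (i + 1), u7 (i + 3)])
        (fun i => Form.detForm ![u7 (i + 2), u7 (i + 4), u7 (i + 5), u7 (i + 6)]) j := by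
    rintro (i | i) <;> congr 1 <;> funext k <;> fin_cases k <;> rfl
  funext z
  simp only [Phi, Form.basisSum, summand, Fintype.sum_sum_type, spin7Coeff,
    dual_wedge_dual_wedge_dual_wedge_dual, Finset.sum_apply, Pi.smul_apply, smul_eq_mul]
  simp [Finset.mul_sum, sub_eq_add_neg]

/-- for all `x y : ℝ⁸`, `⟨x⌟Φ, y⌟Φ⟩ = 7⟨x,y⟩`. -/
theorem stmt1 (σ : ℝ) (hσ : σ = 1 ∨ σ = -1) (x y : E8) :
    Form.inner' (Form.iprod x (Phi σ) : Form 8 3) (Form.iprod y (Phi σ) : Form 8 3)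
      = 7 * ⟪x, y⟫ := by
  obtain ⟨s, hs, rfl⟩ : ∃ s : ℤ, (s = 1 ∨ s = -1) ∧ σ = s := by
    rcases hσ with rfl | rfl
    exacts [⟨1, .inl rfl, by simp⟩, ⟨-1, .inr rfl, by simp⟩]
  rw [Phi_eq_basisSum, Form.inner'_iprod_basisSum]
  simp [contractionGram_spin7 s hs, PiLp.inner_apply, Finset.mul_sum, mul_comm]
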